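/- arXiv:2303.02014 — 10 statements merged into one kernel-verified Lean document; each statement's English description precedes it below -/
import Mathlib

section
/- Let (Ω, P) be a probability space, X : Ω → ℝ a random variable, ε > 0 a real tolerance, and T ∈ (0,1). Suppose there exist reals L ≤ R with P(L ≤ X ≤ R) = 1. If for every real constant c we have P(|X − c| ≤ ε) ≤ T, then R − L > (⌈1/T⌉ − 1) · 2ε. -/
open MeasureTheory Set Metric

/-! If `R - L ≤ n · 2ε`, the closed `ε`-balls around the midpoints of the partition of `[L, R]`
into `n` intervals of length `2ε` cover `[L, R]`, so `1 = μ(X ∈ [L, R]) ≤ n T`. For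
`n = ⌈1/T⌉ - 1` this contradicts `n T < 1`. -/

theorem exists_nat_lt_le_le_succ {n : ℕ} (hn : 0 < n) {t : ℝ} (ht0 : 0 ≤ t) (htn : t ≤ n) :
    ∃ j < n, (j : ℝ) ≤ t ∧ t ≤ j + 1 := by
  refine ⟨min ⌊t⌋₊ (n - 1), by omega, ?_, ?_⟩
  · exact (Nat.cast_le.2 (min_le_left _ _)).trans (Nat.floor_le ht0)
  · rcases min_choice ⌊t⌋₊ (n - 1) with h | h <;> rw [h]
    · exact (Nat.lt_floor_add_one t).le
    · rwa [Nat.cast_pred hn, sub_add_cancel]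

theorem Icc_subset_biUnion_closedBall {ε L R : ℝ} {n : ℕ} (hε : 0 < ε) (hn : 0 < n)
    (hRL : R - L ≤ n * (2 * ε)) :
    Icc L R ⊆ ⋃ j ∈ Finset.range n, closedBall (L + (2 * j + 1) * ε) ε := by
  intro x ⟨hLx, hxR⟩
  have h2ε : 0 < 2 * ε := by positivity
  obtain ⟨j, hjn, hjx, hxj⟩ := exists_nat_lt_le_le_succ hn (t := (x - L) / (2 * ε))
    (by apply div_nonneg <;> linarith) ((div_le_iff₀ h2ε).2 (by linarith))
  rw [le_div_iff₀ h2ε] at hjx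
  rw [div_le_iff₀ h2ε] at hxj
  refine mem_biUnion (Finset.mem_range.2 hjn) ?_
  rw [Real.closedBall_eq_Icc]
  constructor <;> linarith

theorem one_le_mul_of_forall_measure_closedBall_le {Ω : Type*} [MeasurableSpace Ω]
    {μ : Measure Ω} {X : Ω → ℝ} {ε T L R : ℝ} {n : ℕ} (hε : 0 < ε) (hn : 0 < n)
    (hRL : R - L ≤ n * (2 * ε)) (hsupp : μ (X ⁻¹' Icc L R) = 1)
    (hball : ∀ c, μ (X ⁻¹' closedBall c ε) ≤ ENNReal.ofReal T) : 1 ≤ n * T := by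
  set c : ℕ → ℝ := fun j ↦ L + (2 * j + 1) * ε
  have hcover : X ⁻¹' Icc L R ⊆ ⋃ j ∈ Finset.range n, X ⁻¹' closedBall (c j) ε := by
    simpa only [preimage_iUnion] using preimage_mono (Icc_subset_biUnion_closedBall hε hn hRL)
  rw [← ENNReal.one_le_ofReal, ENNReal.ofReal_mul n.cast_nonneg, ENNReal.ofReal_natCast]
  calc 1 = μ (X ⁻¹' Icc L R) := hsupp.symm
    _ ≤ ∑ j ∈ Finset.range n, μ (X ⁻¹' closedBall (c j) ε) :=
      (measure_mono hcover).trans (measure_biUnion_finset_le _ _)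
    _ ≤ ∑ _j ∈ Finset.range n, ENNReal.ofReal T := Finset.sum_le_sum fun j _ ↦ hball (c j)
    _ = n * ENNReal.ofReal T := by rw [Finset.sum_const, Finset.card_range, nsmul_eq_mul]

theorem stmt_0_general {Ω : Type*} [MeasurableSpace Ω] (μ : Measure Ω)
    (X : Ω → ℝ) (ε T L R : ℝ) (hε : 0 < ε) (hT0 : 0 < T) (hT1 : T < 1)
    (hsupp : μ {ω | L ≤ X ω ∧ X ω ≤ R} = 1)
    (hatt : ∀ c : ℝ, μ {ω | |X ω - c| ≤ ε} ≤ ENNReal.ofReal T) :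
    ((⌈1 / T⌉ : ℝ) - 1) * (2 * ε) < R - L := by
  have hceil : 1 < ⌈1 / T⌉ := Int.lt_ceil.2 (by exact_mod_cast one_lt_one_div hT0 hT1)
  obtain ⟨n, hn⟩ : ∃ n : ℕ, (n : ℤ) = ⌈1 / T⌉ - 1 := ⟨_, Int.toNat_of_nonneg (by omega)⟩
  have hn_cast : (⌈1 / T⌉ : ℝ) - 1 = n := by exact_mod_cast hn.symm
  have hnT : n * T < 1 := by
    rw [← hn_cast, ← lt_div_iff₀ hT0]
    linarith [Int.ceil_lt_add_one (1 / T)]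
  rw [hn_cast]
  by_contra! hRL
  exact hnT.not_ge (one_le_mul_of_forall_measure_closedBall_le hε (by omega) hRL hsupp
    fun c ↦ by simpa only [preimage, mem_closedBall, Real.dist_eq] using hatt c)

theorem stmt_0 {Ω : Type*} [MeasurableSpace Ω] (μ : Measure Ω) [IsProbabilityMeasure μ]
    (X : Ω → ℝ) (ε T L R : ℝ) (hε : 0 < ε) (hT0 : 0 < T) (hT1 : T < 1)
    (hLR : L ≤ R) (hsupp : μ {ω | L ≤ X ω ∧ X ω ≤ R} = 1)
    (hatt : ∀ c : ℝ, μ {ω | |X ω - c| ≤ ε} ≤ ENNReal.ofReal T) :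
    ((⌈1 / T⌉ : ℝ) - 1) * (2 * ε) < R - L :=
  stmt_0_general μ X ε T L R hε hT0 hT1 hsupp hatt
end

section
/- Let (Ω, P) be a probability space, X : Ω → ℝ a random variable, ε > 0 a real tolerance, and D > 0 a real. Suppose there exist reals L ≤ R with P(L ≤ X ≤ R) = 1 and R − L ≤ D. Then there exists a real constant c such that P(|X − c| ≤ ε) ≥ 1 / ⌈D/(2ε)⌉. -/
/-!
Cut `[L, L + 2εn]`, with `n = ⌈D / (2ε)⌉`, into `n` closed intervals of length `2ε`. They cover
`[L, R]`, which carries all the mass of `X`, so by the union bound and pigeonhole one of them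
carries mass at least `1 / n`; its midpoint is the required guess `c`.
-/

open MeasureTheory Set
open scoped ENNReal

theorem exists_lt_mem_Icc_of_mem_Icc {t : ℝ} {n : ℕ} (hn : n ≠ 0) (ht : t ∈ Icc 0 (n : ℝ)) :
    ∃ i < n, t ∈ Icc (i : ℝ) (i + 1) := by
  obtain ⟨ht0, htn⟩ := ht
  refine ⟨min ⌊t⌋₊ (n - 1), by omega, ?_, ?_⟩
  · exact (Nat.cast_le.2 (min_le_left _ _)).trans (Nat.floor_le ht0)
  · rcases le_total ⌊t⌋₊ (n - 1) with h | h
    · rw [min_eq_left h]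
      exact (Nat.lt_floor_add_one t).le
    · rw [min_eq_right h, Nat.cast_sub (by omega), Nat.cast_one, sub_add_cancel]
      exact htn

theorem exists_abs_sub_midpoint_le {ε l x : ℝ} (hε : 0 < ε) {n : ℕ} (hn : n ≠ 0)
    (hx : x ∈ Icc l (l + 2 * ε * n)) : ∃ i < n, |x - (l + (2 * i + 1) * ε)| ≤ ε := by
  have h2ε : 0 < 2 * ε := by positivity
  have ht : (x - l) / (2 * ε) ∈ Icc 0 (n : ℝ) := by
    constructor
    · exact div_nonneg (by linarith [hx.1]) h2ε.le
    · rw [div_le_iff₀ h2ε]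
      linarith [hx.2]
  obtain ⟨i, hin, hi⟩ := exists_lt_mem_Icc_of_mem_Icc hn ht
  rw [mem_Icc, le_div_iff₀ h2ε, div_le_iff₀ h2ε] at hi
  exact ⟨i, hin, abs_le.2 ⟨by linarith [hi.1], by linarith [hi.2]⟩⟩

theorem exists_measure_div_le_of_subset_biUnion {α : Type*} [MeasurableSpace α]
    (μ : Measure α) {s : Set α} {A : ℕ → Set α} {n : ℕ} (hn : n ≠ 0)
    (hs : s ⊆ ⋃ i ∈ Finset.range n, A i) : ∃ i < n, μ s / n ≤ μ (A i) := by
  have hsum : ∑ _i ∈ Finset.range n, μ s / n ≤ ∑ i ∈ Finset.range n, μ (A i) :=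
    calc ∑ _i ∈ Finset.range n, μ s / n = μ s := by
          rw [Finset.sum_const, Finset.card_range, nsmul_eq_mul,
            ENNReal.mul_div_cancel (by exact_mod_cast hn) (ENNReal.natCast_ne_top n)]
      _ ≤ μ (⋃ i ∈ Finset.range n, A i) := measure_mono hs
      _ ≤ ∑ i ∈ Finset.range n, μ (A i) := measure_biUnion_finset_le _ _
  obtain ⟨i, hi, hle⟩ := ENNReal.exists_le_of_sum_le (Finset.nonempty_range_iff.2 hn) hsum
  exact ⟨i, Finset.mem_range.1 hi, hle⟩

theorem stmt_1_general {Ω : Type*} [MeasurableSpace Ω] (μ : Measure Ω) [IsProbabilityMeasure μ]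
    (X : Ω → ℝ) (ε D L R : ℝ) (hε : 0 < ε) (hD : 0 < D)
    (hsupp : μ {ω | L ≤ X ω ∧ X ω ≤ R} = 1) (hRL : R - L ≤ D) :
    ∃ c : ℝ, ENNReal.ofReal (1 / (⌈D / (2 * ε)⌉ : ℝ)) ≤ μ {ω | |X ω - c| ≤ ε} := by
  set n := ⌈D / (2 * ε)⌉₊
  have hpos : 0 < D / (2 * ε) := by positivity
  have hn : n ≠ 0 := (Nat.ceil_pos.2 hpos).ne'
  have hceil : (⌈D / (2 * ε)⌉ : ℝ) = n := by
    exact_mod_cast (Int.natCast_ceil_eq_ceil hpos.le).symm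
  have hR : R ≤ L + 2 * ε * n := by
    have := (div_le_iff₀' (by positivity : (0 : ℝ) < 2 * ε)).1 (Nat.le_ceil (D / (2 * ε)))
    linarith
  have hcover : {ω | L ≤ X ω ∧ X ω ≤ R} ⊆
      ⋃ i ∈ Finset.range n, {ω | |X ω - (L + (2 * i + 1) * ε)| ≤ ε} := by
    rintro ω ⟨hL, hXR⟩
    obtain ⟨i, hin, hi⟩ := exists_abs_sub_midpoint_le hε hn ⟨hL, hXR.trans hR⟩
    exact mem_biUnion (Finset.mem_range.2 hin) hi
  obtain ⟨i, -, hi⟩ := exists_measure_div_le_of_subset_biUnion μ hn hcover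
  refine ⟨L + (2 * i + 1) * ε, ?_⟩
  rwa [hceil, ENNReal.ofReal_div_of_pos (by positivity), ENNReal.ofReal_one,
    ENNReal.ofReal_natCast, ← hsupp]

theorem stmt_1 {Ω : Type*} [MeasurableSpace Ω] (μ : Measure Ω) [IsProbabilityMeasure μ]
    (X : Ω → ℝ) (ε D L R : ℝ) (hε : 0 < ε) (hD : 0 < D)
    (hLR : L ≤ R) (hsupp : μ {ω | L ≤ X ω ∧ X ω ≤ R} = 1) (hRL : R - L ≤ D) :
    ∃ c : ℝ, ENNReal.ofReal (1 / (⌈D / (2 * ε)⌉ : ℝ)) ≤ μ {ω | |X ω - c| ≤ ε} :=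
  stmt_1_general μ X ε D L R hε hD hsupp hRL
end

section
/- Fix reals u̲ and s > 0, an integer N ≥ 1, and ε > 0. Let U be a random variable uniformly distributed on [u̲, u̲ + N·s], let V be a random vector in ℝ^d (arbitrary distribution) independent of U, and let m : ℝ^d → ℝ be any measurable function. Define the quantization map M(u) = u̲ + (⌊(u − u̲)/s⌋ + 1/2)·s. Then for every measurable attacker ĝ : ℝ × ℝ^d → ℝ, P( |ĝ(M(U), V) − (U + m(V))| ≤ ε ) ≤ 2ε/s. -/
/-!
For a fixed value `v` of the nuisance parameters, the attacker's guess `g (M u, v)` depends on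
`u` only through the bin containing `u`, so on `[u₀, u₀ + N s)` it takes at most `N` values.
Hence the guess is within `ε` of the secret `u + m v` only for `u` in a union of `N` intervals
of length `2ε`, a set of uniform probability at most `2Nε / (N s) = 2ε / s`. Independence of
`U` and `V` lets us integrate this bound over the law of `V`.
-/

open MeasureTheory ProbabilityTheory

lemma volume_inter_setOf_abs_sub_le_le {S : Set ℝ} {h : ℝ → ℝ} {t : Finset ℝ}
    (hS : ∀ u ∈ S, h u ∈ t) (ε : ℝ) :
    volume (S ∩ {u | |h u - u| ≤ ε}) ≤ t.card * ENNReal.ofReal (2 * ε) := by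
  calc volume (S ∩ {u | |h u - u| ≤ ε})
      ≤ volume (⋃ c ∈ t, Set.Icc (c - ε) (c + ε)) := by
        refine measure_mono fun u ⟨huS, hu⟩ => Set.mem_biUnion (hS u huS) ?_
        obtain ⟨hu₁, hu₂⟩ := abs_sub_le_iff.mp (show |h u - u| ≤ ε from hu)
        exact ⟨by linarith, by linarith⟩
    _ ≤ ∑ c ∈ t, volume (Set.Icc (c - ε) (c + ε)) := measure_biUnion_finset_le _ _
    _ = t.card * ENNReal.ofReal (2 * ε) := by
        simp only [Real.volume_Icc, add_sub_sub_cancel, ← two_mul, Finset.sum_const, nsmul_eq_mul]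

lemma floor_midpoint_mem_image {u₀ s u : ℝ} {N : ℕ} (hs : 0 < s)
    (hu : u ∈ Set.Ico u₀ (u₀ + N * s)) :
    u₀ + ((⌊(u - u₀) / s⌋ : ℝ) + 1 / 2) * s
      ∈ (Finset.range N).image fun k : ℕ => u₀ + ((k : ℝ) + 1 / 2) * s := by
  have hx : 0 ≤ (u - u₀) / s := div_nonneg (by linarith [hu.1]) hs.le
  refine Finset.mem_image.mpr ⟨⌊(u - u₀) / s⌋₊, Finset.mem_range.mpr ?_, ?_⟩
  · rw [Nat.floor_lt hx, div_lt_iff₀ hs]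
    linarith [hu.2]
  · rw [← Int.natCast_floor_eq_floor hx, Int.cast_natCast]

lemma volume_Ico_inter_setOf_abs_comp_quantize_sub_le {s : ℝ} (hs : 0 < s) (u₀ : ℝ) (N : ℕ)
    (φ : ℝ → ℝ) (ε : ℝ) :
    volume (Set.Ico u₀ (u₀ + N * s) ∩
        {u | |φ (u₀ + ((⌊(u - u₀) / s⌋ : ℝ) + 1 / 2) * s) - u| ≤ ε})
      ≤ N * ENNReal.ofReal (2 * ε) := by
  set t := ((Finset.range N).image fun k : ℕ => u₀ + ((k : ℝ) + 1 / 2) * s).image φ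
  have ht : t.card ≤ N :=
    Finset.card_image_le.trans (Finset.card_image_le.trans (Finset.card_range N).le)
  calc _ ≤ t.card * ENNReal.ofReal (2 * ε) := volume_inter_setOf_abs_sub_le_le
          (fun u hu => Finset.mem_image_of_mem φ (floor_midpoint_mem_image hs hu)) ε
    _ ≤ N * ENNReal.ofReal (2 * ε) := by gcongr

lemma smul_volume_restrict_Icc_apply_le {a L q : ℝ} (hL : 0 < L) {B : Set ℝ}
    (hB : volume (Set.Ico a (a + L) ∩ B) ≤ ENNReal.ofReal q) :
    (ENNReal.ofReal (1 / L) • volume.restrict (Set.Icc a (a + L))) B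
      ≤ ENNReal.ofReal (q / L) := by
  rw [Measure.smul_apply, ← Measure.restrict_congr_set Ico_ae_eq_Icc,
    Measure.restrict_apply' measurableSet_Ico, Set.inter_comm, smul_eq_mul]
  calc _ ≤ ENNReal.ofReal (1 / L) * ENNReal.ofReal q := by gcongr
    _ = ENNReal.ofReal (q / L) := by
        rw [← ENNReal.ofReal_mul (by positivity), one_div_mul_eq_div]

lemma ProbabilityTheory.IndepFun.measure_preimage_le_of_forall_slice_le {Ω α β : Type*} [MeasurableSpace Ω]
    [MeasurableSpace α] [MeasurableSpace β] {μ : Measure Ω} [IsProbabilityMeasure μ]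
    {X : Ω → α} {Y : Ω → β} (hXY : IndepFun X Y μ) (hX : Measurable X) (hY : Measurable Y)
    {A : Set (α × β)} (hA : MeasurableSet A) {c : ENNReal}
    (hc : ∀ x, μ.map Y (Prod.mk x ⁻¹' A) ≤ c) :
    μ ((fun ω => (X ω, Y ω)) ⁻¹' A) ≤ c := by
  have := Measure.isProbabilityMeasure_map (μ := μ) hX.aemeasurable
  have := Measure.isProbabilityMeasure_map (μ := μ) hY.aemeasurable
  rw [← Measure.map_apply (hX.prodMk hY) hA,
    (indepFun_iff_map_prod_eq_prod_map_map hX.aemeasurable hY.aemeasurable).mp hXY,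
    Measure.prod_apply hA]
  calc _ ≤ ∫⁻ _, c ∂(μ.map X) := lintegral_mono hc
    _ = c := by simp

theorem stmt_2_general {Ω : Type*} [MeasurableSpace Ω] (μ : Measure Ω) [IsProbabilityMeasure μ]
    (u₀ s ε : ℝ) (hs : 0 < s) (N : ℕ) (hN : 1 ≤ N) (d : ℕ)
    (U : Ω → ℝ) (V : Ω → (Fin d → ℝ)) (hU : Measurable U) (hV : Measurable V)
    (hUdist : Measure.map U μ
      = ENNReal.ofReal (1 / (N * s)) • volume.restrict (Set.Icc u₀ (u₀ + N * s)))
    (hindep : IndepFun U V μ)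
    (m : (Fin d → ℝ) → ℝ) (hm : Measurable m)
    (M : ℝ → ℝ) (hM : ∀ u : ℝ, M u = u₀ + ((⌊(u - u₀) / s⌋ : ℝ) + 1 / 2) * s)
    (g : ℝ × (Fin d → ℝ) → ℝ) (hg : Measurable g) :
    μ {ω | |g (M (U ω), V ω) - (U ω + m (V ω))| ≤ ε} ≤ ENNReal.ofReal (2 * ε / s) := by
  have hMmeas : Measurable M := by
    rw [funext hM]
    fun_prop
  set A : Set ((Fin d → ℝ) × ℝ) := {p | |g (M p.2, p.1) - m p.1 - p.2| ≤ ε}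
  have hA : MeasurableSet A := measurableSet_le (by fun_prop) measurable_const
  have hevent : {ω | |g (M (U ω), V ω) - (U ω + m (V ω))| ≤ ε}
      = (fun ω => (V ω, U ω)) ⁻¹' A := by
    ext ω
    simp only [A, Set.mem_ofPred_eq, Set.mem_preimage, sub_add_eq_sub_sub_swap]
  have hNs : (0 : ℝ) < N * s := mul_pos (by exact_mod_cast hN) hs
  rw [hevent]
  refine hindep.symm.measure_preimage_le_of_forall_slice_le hV hU hA fun v => ?_
  have hslice := volume_Ico_inter_setOf_abs_comp_quantize_sub_le hs u₀ N
    (fun x => g (x, v) - m v) ε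
  simp only [← hM] at hslice
  rw [← ENNReal.ofReal_natCast, ← ENNReal.ofReal_mul (Nat.cast_nonneg N)] at hslice
  rw [hUdist]
  convert smul_volume_restrict_Icc_apply_le hNs hslice using 2
  · rfl
  · exact (mul_div_mul_left _ _ (Nat.cast_ne_zero.mpr (by omega))).symm

theorem stmt_2 {Ω : Type*} [MeasurableSpace Ω] (μ : Measure Ω) [IsProbabilityMeasure μ]
    (u₀ s ε : ℝ) (hs : 0 < s) (hε : 0 < ε) (N : ℕ) (hN : 1 ≤ N) (d : ℕ)
    (U : Ω → ℝ) (V : Ω → (Fin d → ℝ)) (hU : Measurable U) (hV : Measurable V)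
    (hUdist : Measure.map U μ
      = ENNReal.ofReal (1 / (N * s)) • volume.restrict (Set.Icc u₀ (u₀ + N * s)))
    (hindep : IndepFun U V μ)
    (m : (Fin d → ℝ) → ℝ) (hm : Measurable m)
    (M : ℝ → ℝ) (hM : ∀ u : ℝ, M u = u₀ + ((⌊(u - u₀) / s⌋ : ℝ) + 1 / 2) * s)
    (g : ℝ × (Fin d → ℝ) → ℝ) (hg : Measurable g) :
    μ {ω | |g (M (U ω), V ω) - (U ω + m (V ω))| ≤ ε} ≤ ENNReal.ofReal (2 * ε / s) :=
  stmt_2_general μ u₀ s ε hs N hN d U V hU hV hUdist hindep m hm M hM g hg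
end

section
/- Let f : ℝ → ℝ be L-Lipschitz on [x̲, x̄] with L > 0, satisfying f(x) ≥ c̲ ≥ 0 for all x ∈ [x̲, x̄], and ∫_{x̲}^{x̄} f(x) dx > 0. Let 0 < δ ≤ x̄ − x̲ and set x* = x̄ + c̲/L − δ/2 − √((c̲/L − δ/2)² + 2c̲(x̄ − x̲)/L). Then for every x' ∈ [x̲, x̄ − δ], (∫_{x'}^{x'+δ} f(x) dx) / (∫_{x̲}^{x̄} f(x) dx) ≤ δ·[c̲ + L(x̄ − x* − δ/2)] / (c̲(x̄ − x̲) + (L/2)(x̄ − x*)²). -/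
/-!
Let `W` be the mass of the window `[x', x' + δ]` and `H = W / δ` its mean. Averaging the Lipschitz
bound over the window gives `f x ≥ H - L |x - m|` off the window, where `m` is its midpoint. Take
an interval `J ⊇ [x', x' + δ]` of length `w = x̄ - x*` inside `[x̲, x̄]`: this bound on `J` and
`f ≥ c` off `J` show that the total mass is at least `H w - L w (w - δ) / 2 + c (x̄ - x̲ - w)`,
which is `H w` because `w` is the root of `L w (w - δ) / 2 = c (x̄ - x̲ - w)`. So the ratio is at
most `δ / w`, and this is the stated bound.
-/

open Set MeasureTheory
open scoped NNReal

lemma integral_const_add_mul_id (A B p q : ℝ) :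
    ∫ y in p..q, (A + B * y) = A * (q - p) + B * (q ^ 2 - p ^ 2) / 2 := by
  rw [intervalIntegral.integral_add intervalIntegrable_const
      ((continuous_const_mul B).intervalIntegrable p q),
    intervalIntegral.integral_const_mul, integral_id, intervalIntegral.integral_const, smul_eq_mul]
  ring

lemma mul_sub_le_integral_of_forall_le {f : ℝ → ℝ} {a b c : ℝ} (hab : a ≤ b)
    (hfi : IntervalIntegrable f volume a b) (hc : ∀ x ∈ Icc a b, c ≤ f x) :
    c * (b - a) ≤ ∫ x in a..b, f x := by
  simpa [mul_comm] using intervalIntegral.integral_mono_on hab intervalIntegrable_const hfi hc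

lemma LipschitzOnWith.le_mul_integral_left {f : ℝ → ℝ} {L : ℝ≥0} {s a b : ℝ}
    (hf : LipschitzOnWith L f (Icc s b)) (hsa : s ≤ a) (hab : a ≤ b) :
    (a - s) * (∫ y in a..b, f y) - L * (b - a) * ((a - s) * (b - s)) / 2
      ≤ (b - a) * ∫ x in s..a, f x := by
  have hfi : ∀ p ∈ Icc s b, ∀ q ∈ Icc s b, IntervalIntegrable f volume p q := fun p hp q hq =>
    (hf.continuousOn.mono (uIcc_subset_Icc hp hq)).intervalIntegrable
  have hpoint : ∀ x ∈ Icc s a,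
      ∫ y in a..b, f y ≤ (f x - L * x) * (b - a) + L * (b ^ 2 - a ^ 2) / 2 := by
    intro x hx
    rw [← integral_const_add_mul_id]
    refine intervalIntegral.integral_mono_on hab (hfi a ⟨hsa, hab⟩ b ⟨hsa.trans hab, le_rfl⟩)
      (Continuous.intervalIntegrable (by fun_prop) _ _) fun y hy => ?_
    have hxy := hf.dist_le_mul y ⟨hsa.trans hy.1, hy.2⟩ x ⟨hx.1, hx.2.trans hab⟩
    rw [Real.dist_eq, Real.dist_eq, abs_of_nonneg (a := y - x) (by linarith [hx.2, hy.1])] at hxy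
    linarith [le_abs_self (f y - f x)]
  calc (a - s) * (∫ y in a..b, f y) - L * (b - a) * ((a - s) * (b - s)) / 2
      = ∫ x in s..a, ((∫ y in a..b, f y) - L * (b ^ 2 - a ^ 2) / 2 + L * (b - a) * x) := by
        rw [integral_const_add_mul_id]; ring
    _ ≤ ∫ x in s..a, (b - a) * f x :=
        intervalIntegral.integral_mono_on hsa (Continuous.intervalIntegrable (by fun_prop) _ _)
          ((hfi s ⟨le_rfl, hsa.trans hab⟩ a ⟨hsa, hab⟩).const_mul _) fun x hx => by
            nlinarith [hpoint x hx]
    _ = (b - a) * ∫ x in s..a, f x := intervalIntegral.integral_const_mul _ _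

lemma LipschitzOnWith.le_mul_integral_right {f : ℝ → ℝ} {L : ℝ≥0} {a b t : ℝ}
    (hf : LipschitzOnWith L f (Icc a t)) (hab : a ≤ b) (hbt : b ≤ t) :
    (t - b) * (∫ y in a..b, f y) - L * (b - a) * ((t - b) * (t - a)) / 2
      ≤ (b - a) * ∫ x in b..t, f x := by
  have hneg : LipschitzOnWith L (fun x => f (-x)) (Icc (-t) (-a)) :=
    LipschitzOnWith.of_dist_le_mul fun x hx y hy => by
      simpa [dist_neg_neg] using
        hf.dist_le_mul (-x) ⟨le_neg.1 hx.2, neg_le.1 hx.1⟩ (-y) ⟨le_neg.1 hy.2, neg_le.1 hy.1⟩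
  have := hneg.le_mul_integral_left (neg_le_neg hbt) (neg_le_neg hab)
  simp only [intervalIntegral.integral_comp_neg, neg_neg] at this
  convert this using 2 <;> ring

/-- The paper's `x̄ - x*`: the length of the ramp of the extremal density `c + L (x - x*)⁺`. -/
noncomputable def rampLength (L c δ X : ℝ) : ℝ :=
  √((c / L - δ / 2) ^ 2 + 2 * c * X / L) - (c / L - δ / 2)

section rampLength

variable {L c δ X : ℝ}

lemma rampLength_spec (hL : 0 < L) (hc : 0 ≤ c) (hX : 0 ≤ X) :
    L * rampLength L c δ X * (rampLength L c δ X - δ) / 2 = c * (X - rampLength L c δ X) := by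
  have hS := Real.sq_sqrt (show 0 ≤ (c / L - δ / 2) ^ 2 + 2 * c * X / L by positivity)
  unfold rampLength
  set B := c / L - δ / 2
  set S := √(B ^ 2 + 2 * c * X / L)
  have hLB : L * B = c - L * δ / 2 := by simp only [B]; field_simp
  have hLS : L * S ^ 2 = L * B ^ 2 + 2 * c * X := by rw [hS]; field_simp
  linear_combination (1 / 2) * hLS - (S - B) * hLB

lemma le_rampLength (hL : 0 < L) (hc : 0 ≤ c) (hδ : 0 < δ) (hδX : δ ≤ X) :
    δ ≤ rampLength L c δ X := by
  have hcL : 0 ≤ c / L := div_nonneg hc hL.le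
  have : c / L - δ / 2 + δ ≤ √((c / L - δ / 2) ^ 2 + 2 * c * X / L) := by
    rw [Real.le_sqrt' (by linarith),
      show (c / L - δ / 2 + δ) ^ 2 = (c / L - δ / 2) ^ 2 + 2 * c * δ / L by ring]
    have : 2 * c * δ / L ≤ 2 * c * X / L := by gcongr
    linarith
  unfold rampLength
  linarith

lemma rampLength_le (hL : 0 < L) (hc : 0 ≤ c) (hδ : 0 ≤ δ) (hδX : δ ≤ X) :
    rampLength L c δ X ≤ X := by
  have hcL : 0 ≤ c / L := div_nonneg hc hL.le
  have : √((c / L - δ / 2) ^ 2 + 2 * c * X / L) ≤ c / L - δ / 2 + X := by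
    rw [Real.sqrt_le_left (by linarith),
      show (c / L - δ / 2 + X) ^ 2 = (c / L - δ / 2) ^ 2 + 2 * c * X / L + X * (X - δ) by ring]
    linarith [mul_nonneg (hδ.trans hδX) (sub_nonneg.2 hδX)]
  unfold rampLength
  linarith

end rampLength

lemma LipschitzOnWith.integral_window_mul_le {f : ℝ → ℝ} {L : ℝ≥0} {c x₁ x₂ s x' δ w : ℝ}
    (hf : LipschitzOnWith L f (Icc x₁ x₂)) (hlb : ∀ x ∈ Icc x₁ x₂, c ≤ f x)
    (hs₁ : x₁ ≤ s) (hsx' : s ≤ x') (hδ : 0 ≤ δ) (hx'w : x' + δ ≤ s + w) (hs₂ : s + w ≤ x₂)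
    (hw : L * w * (w - δ) / 2 ≤ c * (x₂ - x₁ - w)) :
    (∫ x in x'..x' + δ, f x) * w ≤ δ * ∫ x in x₁..x₂, f x := by
  have hfi : ∀ p q, x₁ ≤ p → p ≤ x₂ → x₁ ≤ q → q ≤ x₂ → IntervalIntegrable f volume p q :=
    fun p q hp₁ hp₂ hq₁ hq₂ =>
      (hf.continuousOn.mono (uIcc_subset_Icc ⟨hp₁, hp₂⟩ ⟨hq₁, hq₂⟩)).intervalIntegrable
  have hsplit : ∫ x in x₁..x₂, f x = (∫ x in x₁..s, f x) + (∫ x in s..x', f x)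
      + (∫ x in x'..x' + δ, f x) + (∫ x in x' + δ..s + w, f x) + ∫ x in s + w..x₂, f x := by
    rw [intervalIntegral.integral_add_adjacent_intervals,
      intervalIntegral.integral_add_adjacent_intervals,
      intervalIntegral.integral_add_adjacent_intervals,
      intervalIntegral.integral_add_adjacent_intervals]
    all_goals apply hfi <;> linarith
  have hwindow : x' ≤ x' + δ := le_add_of_nonneg_right hδ
  have hleft := (hf.mono (Icc_subset_Icc hs₁ (by linarith))).le_mul_integral_left hsx' hwindow
  have hright :=
    (hf.mono (Icc_subset_Icc (hs₁.trans hsx') hs₂)).le_mul_integral_right hwindow hx'w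
  have hout₁ :=
    mul_sub_le_integral_of_forall_le hs₁ (hfi _ _ le_rfl (by linarith) hs₁ (by linarith))
      fun x hx => hlb x ⟨hx.1, by linarith [hx.2]⟩
  have hout₂ :=
    mul_sub_le_integral_of_forall_le hs₂ (hfi _ _ (by linarith) hs₂ (by linarith) le_rfl)
      fun x hx => hlb x ⟨by linarith [hx.1], hx.2⟩
  rw [hsplit]
  have hδout₁ := mul_le_mul_of_nonneg_left hout₁ hδ
  have hδout₂ := mul_le_mul_of_nonneg_left hout₂ hδ
  have hδw := mul_le_mul_of_nonneg_left hw hδ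
  have hpq : 0 ≤ L * δ * ((x' - s) * (s + w - (x' + δ))) := by
    have := sub_nonneg.2 hsx'; have := sub_nonneg.2 hx'w; positivity
  linarith

theorem stmt_4_general (f : ℝ → ℝ) (L c x₁ x₂ δ : ℝ) (hL : 0 < L)
    (hlip : ∀ x ∈ Set.Icc x₁ x₂, ∀ y ∈ Set.Icc x₁ x₂, |f x - f y| ≤ L * |x - y|)
    (hc : 0 ≤ c) (hlb : ∀ x ∈ Set.Icc x₁ x₂, c ≤ f x)
    (hint : 0 < ∫ x in x₁..x₂, f x)
    (hδ0 : 0 < δ) (hδ : δ ≤ x₂ - x₁)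
    (xstar : ℝ)
    (hxstar : xstar = x₂ + c / L - δ / 2
      - Real.sqrt ((c / L - δ / 2) ^ 2 + 2 * c * (x₂ - x₁) / L)) :
    ∀ x' ∈ Set.Icc x₁ (x₂ - δ),
      (∫ x in x'..(x' + δ), f x) / (∫ x in x₁..x₂, f x)
        ≤ δ * (c + L * (x₂ - xstar - δ / 2))
          / (c * (x₂ - x₁) + L / 2 * (x₂ - xstar) ^ 2) := by
  rintro x' ⟨hx'₁, hx'₂⟩
  have hf : LipschitzOnWith L.toNNReal f (Icc x₁ x₂) :=
    LipschitzOnWith.of_dist_le' fun x hx y hy => by simpa only [Real.dist_eq] using hlip x hx y hy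
  rw [show x₂ - xstar = rampLength L c δ (x₂ - x₁) by rw [hxstar, rampLength]; ring]
  set w := rampLength L c δ (x₂ - x₁)
  have hδw : δ ≤ w := le_rampLength hL hc hδ0 hδ
  have hwX : w ≤ x₂ - x₁ := rampLength_le hL hc hδ0.le hδ
  have hspec : L * w * (w - δ) / 2 = c * (x₂ - x₁ - w) := rampLength_spec hL hc (by linarith)
  have hden : c * (x₂ - x₁) + L / 2 * w ^ 2 = w * (c + L * (w - δ / 2)) := by
    linear_combination -hspec
  have hN : 0 < c + L * (w - δ / 2) := add_pos_of_nonneg_of_pos hc (mul_pos hL (by linarith))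
  rw [hden, mul_div_mul_right δ w hN.ne', div_le_div_iff₀ hint (by linarith)]
  refine hf.integral_window_mul_le hlb (s := min x' (x₂ - w)) (le_min hx'₁ (by linarith))
    (min_le_left _ _) hδ0.le ?_ (by linarith [min_le_right x' (x₂ - w)])
    (by rw [Real.coe_toNNReal L hL.le]; exact hspec.le)
  rcases min_choice x' (x₂ - w) with h | h <;> rw [h] <;> linarith

theorem stmt_4 (f : ℝ → ℝ) (L c x₁ x₂ δ : ℝ) (hL : 0 < L) (hx : x₁ ≤ x₂)
    (hlip : ∀ x ∈ Set.Icc x₁ x₂, ∀ y ∈ Set.Icc x₁ x₂, |f x - f y| ≤ L * |x - y|)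
    (hc : 0 ≤ c) (hlb : ∀ x ∈ Set.Icc x₁ x₂, c ≤ f x)
    (hint : 0 < ∫ x in x₁..x₂, f x)
    (hδ0 : 0 < δ) (hδ : δ ≤ x₂ - x₁)
    (xstar : ℝ)
    (hxstar : xstar = x₂ + c / L - δ / 2
      - Real.sqrt ((c / L - δ / 2) ^ 2 + 2 * c * (x₂ - x₁) / L)) :
    ∀ x' ∈ Set.Icc x₁ (x₂ - δ),
      (∫ x in x'..(x' + δ), f x) / (∫ x in x₁..x₂, f x)
        ≤ δ * (c + L * (x₂ - xstar - δ / 2))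
          / (c * (x₂ - x₁) + L / 2 * (x₂ - xstar) ^ 2) :=
  stmt_4_general f L c x₁ x₂ δ hL hlip hc hlb hint hδ0 hδ xstar hxstar
end

section
/- Let f : ℝ → ℝ be L-Lipschitz on [x̲, x̄] with L > 0 and x̲ < x̄, with ∫_{x̲}^{x̄} f(x) dx = A and f(x) ≥ c̲ for all x ∈ [x̲, x̄]. Then sup_{x ∈ [x̲, x̄]} f(x) ≤ A/(x̄ − x̲) + L(x̄ − x̲)/2 if c̲ ≤ A/(x̄ − x̲) − L(x̄ − x̲)/2, and sup_{x ∈ [x̲, x̄]} f(x) ≤ c̲ + √(2L(A − c̲(x̄ − x̲))) if c̲ > A/(x̄ − x̲) − L(x̄ − x̲)/2. -/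
/-!
Fix `x` and put `t = f x`. The Lipschitz bound puts the cone `s ↦ t - L |s - x|` below `f`, so
`A` is at least the integral of the cone over `[x₁, x₂]`, which is at least
`t (x₂ - x₁) - L (x₂ - x₁)² / 2`; this is the first bound. For the second, apply the same estimate
to `f - c ≥ 0`, now over the part `[u, v]` of `[x₁, x₂]` where the cone of height `t = f x - c` is
nonnegative. In the second regime the first bound gives `t ≤ L (x₂ - x₁)`, so `L (x - u)` and
`L (v - x)` are at most `t` and add up to at least `t`, and then the integral of the cone over
`[u, v]` is at least `t² / (2L)`.
-/

open Set MeasureTheory intervalIntegral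

lemma integral_abs_sub_of_mem_Icc {u v x : ℝ} (hux : u ≤ x) (hxv : x ≤ v) :
    ∫ s in u..v, |s - x| = ((x - u) ^ 2 + (v - x) ^ 2) / 2 := by
  have hint : ∀ p q : ℝ, IntervalIntegrable (fun s => |s - x|) volume p q := fun p q =>
    (continuous_abs.comp (continuous_id.sub continuous_const)).intervalIntegrable p q
  have hleft : ∫ s in u..x, |s - x| = ∫ s in u..x, (x - s) :=
    integral_congr fun s hs => by
      rw [uIcc_of_le hux] at hs
      rw [abs_of_nonpos (by linarith [hs.2]), neg_sub]
  have hright : ∫ s in x..v, |s - x| = ∫ s in x..v, (s - x) :=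
    integral_congr fun s hs => by
      rw [uIcc_of_le hxv] at hs
      rw [abs_of_nonneg (by linarith [hs.1])]
  rw [← integral_add_adjacent_intervals (hint u x) (hint x v), hleft, hright,
    integral_sub intervalIntegrable_const intervalIntegral.intervalIntegrable_id,
    integral_sub intervalIntegral.intervalIntegrable_id intervalIntegrable_const]
  simp only [intervalIntegral.integral_const, integral_id, smul_eq_mul]
  ring

lemma le_integral_of_cone_le {g : ℝ → ℝ} {t L u v x : ℝ} (hux : u ≤ x) (hxv : x ≤ v)
    (hg : IntervalIntegrable g volume u v)
    (hcone : ∀ s ∈ Icc u v, t - L * |s - x| ≤ g s) :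
    t * (v - u) - L * ((x - u) ^ 2 + (v - x) ^ 2) / 2 ≤ ∫ s in u..v, g s := by
  have habs : Continuous fun s => |s - x| := by fun_prop
  calc t * (v - u) - L * ((x - u) ^ 2 + (v - x) ^ 2) / 2
      = ∫ s in u..v, (t - L * |s - x|) := by
        rw [integral_sub intervalIntegrable_const ((habs.intervalIntegrable u v).const_mul L),
          intervalIntegral.integral_const_mul, integral_abs_sub_of_mem_Icc hux hxv,
          intervalIntegral.integral_const, smul_eq_mul]
        ring
    _ ≤ ∫ s in u..v, g s :=
        integral_mono_on (hux.trans hxv)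
          ((continuous_const.sub (habs.const_mul L)).intervalIntegrable u v) hg hcone

lemma le_integral_div_add_of_cone_le {g : ℝ → ℝ} {L a b x : ℝ} (hL : 0 ≤ L) (hab : a < b)
    (hx : x ∈ Icc a b) (hg : IntervalIntegrable g volume a b)
    (hcone : ∀ s ∈ Icc a b, g x - L * |s - x| ≤ g s) :
    g x ≤ (∫ s in a..b, g s) / (b - a) + L * (b - a) / 2 := by
  have hint := le_integral_of_cone_le hx.1 hx.2 hg hcone
  have hsq : (x - a) ^ 2 + (b - x) ^ 2 ≤ (b - a) ^ 2 := by
    nlinarith [mul_nonneg (sub_nonneg.2 hx.1) (sub_nonneg.2 hx.2)]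
  rw [div_add' _ _ _ (sub_pos.2 hab).ne', le_div_iff₀ (sub_pos.2 hab)]
  nlinarith [mul_le_mul_of_nonneg_left hsq hL]

lemma sq_le_two_mul_sub_of_le_add {t P Q : ℝ} (hP : P ≤ t) (hQ : Q ≤ t) (hPQ : t ≤ P + Q) :
    t ^ 2 ≤ 2 * t * (P + Q) - P ^ 2 - Q ^ 2 := by
  nlinarith [mul_le_mul (by linarith : P + Q - t ≤ P) (by linarith : P + Q - t ≤ Q)
    (by linarith) (by linarith : 0 ≤ P)]

lemma sq_le_two_mul_integral_of_cone_le {g : ℝ → ℝ} {L a b x : ℝ} (hL : 0 < L)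
    (hx : x ∈ Icc a b) (hg : IntervalIntegrable g volume a b) (hg0 : ∀ s ∈ Icc a b, 0 ≤ g s)
    (hcone : ∀ s ∈ Icc a b, g x - L * |s - x| ≤ g s) (hgx : g x ≤ L * (b - a)) :
    g x ^ 2 ≤ 2 * L * ∫ s in a..b, g s := by
  set t := g x
  set u := max a (x - t / L)
  set v := min b (x + t / L)
  have ht : 0 ≤ t := hg0 x hx
  have hLd : L * (t / L) = t := mul_div_cancel₀ t hL.ne'
  have hau : a ≤ u := le_max_left _ _
  have hux : u ≤ x := max_le hx.1 (by linarith [div_nonneg ht hL.le])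
  have hxv : x ≤ v := le_min hx.2 (by linarith [div_nonneg ht hL.le])
  have hvb : v ≤ b := min_le_left _ _
  have hP : L * (x - u) ≤ t := by
    have : x - t / L ≤ u := le_max_right _ _
    nlinarith
  have hQ : L * (v - x) ≤ t := by
    have : v ≤ x + t / L := min_le_right _ _
    nlinarith
  have hPQ : t ≤ L * (x - u) + L * (v - x) := by
    rcases max_cases a (x - t / L) with ⟨hu, _⟩ | ⟨hu, _⟩ <;>
      rcases min_cases b (x + t / L) with ⟨hv, _⟩ | ⟨hv, _⟩ <;>
      simp only [u, v, hu, hv] <;> nlinarith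
  have hsub : ∫ s in u..v, g s ≤ ∫ s in a..b, g s :=
    integral_mono_interval hau (hux.trans hxv) hvb
      (ae_restrict_of_forall_mem measurableSet_Ioc fun s hs => hg0 s (Ioc_subset_Icc_self hs)) hg
  have hguv : IntervalIntegrable g volume u v := hg.mono_set <| uIcc_subset_uIcc
    (mem_uIcc_of_le hau (hux.trans (hxv.trans hvb)))
    (mem_uIcc_of_le (hau.trans (hux.trans hxv)) hvb)
  have hcone_uv := le_integral_of_cone_le hux hxv hguv
    fun s hs => hcone s ⟨hau.trans hs.1, hs.2.trans hvb⟩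
  nlinarith [sq_le_two_mul_sub_of_le_add hP hQ hPQ]

theorem stmt_5 (f : ℝ → ℝ) (L c A x₁ x₂ : ℝ) (hL : 0 < L) (hx : x₁ < x₂)
    (hlip : ∀ x ∈ Set.Icc x₁ x₂, ∀ y ∈ Set.Icc x₁ x₂, |f x - f y| ≤ L * |x - y|)
    (hint : (∫ x in x₁..x₂, f x) = A)
    (hlb : ∀ x ∈ Set.Icc x₁ x₂, c ≤ f x) :
    (c ≤ A / (x₂ - x₁) - L * (x₂ - x₁) / 2 →
      ∀ x ∈ Set.Icc x₁ x₂, f x ≤ A / (x₂ - x₁) + L * (x₂ - x₁) / 2) ∧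
    (A / (x₂ - x₁) - L * (x₂ - x₁) / 2 < c →
      ∀ x ∈ Set.Icc x₁ x₂, f x ≤ c + Real.sqrt (2 * L * (A - c * (x₂ - x₁)))) := by
  have hcone : ∀ x ∈ Icc x₁ x₂, ∀ s ∈ Icc x₁ x₂, f x - L * |s - x| ≤ f s := by
    intro x hx s hs
    have := hlip x hx s hs
    rw [abs_sub_comm x s] at this
    linarith [le_abs_self (f x - f s)]
  have hf : IntervalIntegrable f volume x₁ x₂ := ContinuousOn.intervalIntegrable_of_Icc hx.le
    (LipschitzOnWith.of_dist_le_mul (K := L.toNNReal) fun x hx y hy => by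
      simpa only [Real.dist_eq, Real.coe_toNNReal L hL.le] using hlip x hx y hy).continuousOn
  have hupper : ∀ x ∈ Icc x₁ x₂, f x ≤ A / (x₂ - x₁) + L * (x₂ - x₁) / 2 :=
    fun x hxI => hint ▸ le_integral_div_add_of_cone_le hL.le hx hxI hf (hcone x hxI)
  refine ⟨fun _ => hupper, fun hc x hxI => ?_⟩
  have hfc : IntervalIntegrable (fun s => f s - c) volume x₁ x₂ :=
    hf.sub intervalIntegrable_const
  have hintc : ∫ s in x₁..x₂, (f s - c) = A - c * (x₂ - x₁) := by
    rw [integral_sub hf intervalIntegrable_const, hint, intervalIntegral.integral_const,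
      smul_eq_mul, mul_comm]
  have hsq := sq_le_two_mul_integral_of_cone_le hL hxI hfc (fun s hs => sub_nonneg.2 (hlb s hs))
    (fun s hs => by linarith [hcone x hxI s hs]) (by linarith [hupper x hxI])
  rw [hintc] at hsq
  linarith [Real.abs_le_sqrt hsq, le_abs_self (f x - c)]
end

section
/- For reals m, n with m < n define the uniform CDF F_{m,n}(x) = max(0, min(1, (x − m)/(n − m))). Let m₁ < n₁ and m₂ < n₂ with m₁ ≤ m₂. Then (1/2)∫_ℝ |F_{m₁,n₁}(x) − F_{m₂,n₂}(x)| dx equals (m₂ − m₁ + n₂ − n₁)/4 if n₂ ≥ n₁, and equals ((m₂ − m₁)² + (n₁ − n₂)²) / (4(m₂ − m₁ + n₁ − n₂)) if n₂ < n₁. -/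
/-!
Both distribution functions are clamped affine functions `x ↦ (x - m) / (n - m)`, so their
difference vanishes outside `[m₁, max n₁ n₂]` and its sign is governed by where the two affine
pieces cross. If `n₁ ≤ n₂`, the first distribution is stochastically smaller, so the difference
has constant sign and its integral is the difference of the means. If `n₂ < n₁`, the affine
pieces cross at a point `c ∈ [m₂, n₂]`, the difference changes sign exactly there, and
`∫ |F₁ - F₂| = 2 ∫_{m₁}^{c} (F₁ - F₂) - ∫ (F₁ - F₂)`; on `[m₁, c]` both distribution functions
are still given by their affine pieces (or vanish), so the first integral is elementary.
-/

noncomputable def uniformCDF (m n x : ℝ) : ℝ := max 0 (min 1 ((x - m) / (n - m)))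

open MeasureTheory Set

namespace intervalIntegral

theorem integral_abs_eq_of_nonneg_of_nonpos {f : ℝ → ℝ} {a b c : ℝ} (hac : a ≤ c) (hcb : c ≤ b)
    (hfac : IntervalIntegrable f volume a c) (hfcb : IntervalIntegrable f volume c b)
    (hpos : ∀ x ∈ Icc a c, 0 ≤ f x) (hneg : ∀ x ∈ Icc c b, f x ≤ 0) :
    ∫ x in a..b, |f x| = 2 * (∫ x in a..c, f x) - ∫ x in a..b, f x := by
  have hleft : ∫ x in a..c, |f x| = ∫ x in a..c, f x :=
    integral_congr fun x hx => abs_of_nonneg (hpos x (by rwa [uIcc_of_le hac] at hx))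
  have hright : ∫ x in c..b, |f x| = -∫ x in c..b, f x := by
    rw [← integral_neg]
    exact integral_congr fun x hx => abs_of_nonpos (hneg x (by rwa [uIcc_of_le hcb] at hx))
  linarith [integral_add_adjacent_intervals hfac.abs hfcb.abs,
    integral_add_adjacent_intervals hfac hfcb]

end intervalIntegral

open intervalIntegral

section UniformCDF

variable {m n x : ℝ}

theorem continuous_uniformCDF (m n : ℝ) : Continuous (uniformCDF m n) := by
  unfold uniformCDF
  fun_prop

theorem uniformCDF_nonneg (m n x : ℝ) : 0 ≤ uniformCDF m n x := le_max_left _ _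

theorem uniformCDF_le_one (m n x : ℝ) : uniformCDF m n x ≤ 1 :=
  max_le zero_le_one (min_le_left _ _)

theorem uniformCDF_eq_zero (h : m < n) (hx : x ≤ m) : uniformCDF m n x = 0 :=
  max_eq_left <| (min_le_right _ _).trans <|
    div_nonpos_of_nonpos_of_nonneg (by linarith) (by linarith)

theorem uniformCDF_eq_one (h : m < n) (hx : n ≤ x) : uniformCDF m n x = 1 := by
  rw [uniformCDF, min_eq_left ((one_le_div (by linarith)).2 (by linarith))]
  exact max_eq_right zero_le_one

theorem uniformCDF_eq_of_mem_Icc (h : m < n) (hx : x ∈ Icc m n) :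
    uniformCDF m n x = (x - m) / (n - m) := by
  rw [uniformCDF, min_eq_right ((div_le_one (by linarith)).2 (by linarith [hx.2])),
    max_eq_right (div_nonneg (by linarith [hx.1]) (by linarith))]

theorem uniformCDF_le_of_div_le {m₁ n₁ m₂ n₂ x₁ x₂ : ℝ}
    (h : (x₂ - m₂) / (n₂ - m₂) ≤ (x₁ - m₁) / (n₁ - m₁)) :
    uniformCDF m₂ n₂ x₂ ≤ uniformCDF m₁ n₁ x₁ :=
  max_le_max le_rfl (min_le_min le_rfl h)

theorem integral_uniformCDF_of_le_of_le {a b : ℝ} (h : m < n) (ha : a ≤ m) (hm : m ≤ b)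
    (hb : b ≤ n) : ∫ x in a..b, uniformCDF m n x = (b - m) ^ 2 / (2 * (n - m)) := by
  have hzero : ∫ x in a..m, uniformCDF m n x = 0 := by
    rw [integral_congr (g := fun _ => 0) fun x hx => uniformCDF_eq_zero h (by
      rw [uIcc_of_le ha] at hx; exact hx.2)]
    simp
  have hlin : ∫ x in m..b, uniformCDF m n x = ∫ x in m..b, (x - m) / (n - m) :=
    integral_congr fun x hx => uniformCDF_eq_of_mem_Icc h (by
      rw [uIcc_of_le hm] at hx; exact ⟨hx.1, hx.2.trans hb⟩)
  rw [← integral_add_adjacent_intervals ((continuous_uniformCDF m n).intervalIntegrable _ _)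
    ((continuous_uniformCDF m n).intervalIntegrable _ _), hzero, hlin,
    intervalIntegral.integral_div, integral_comp_sub_right (fun x => x), integral_id]
  field_simp [(sub_pos.2 h).ne']
  ring

theorem integral_uniformCDF_of_le {a b : ℝ} (h : m < n) (ha : a ≤ m) (hb : n ≤ b) :
    ∫ x in a..b, uniformCDF m n x = b - (m + n) / 2 := by
  have hone : ∫ x in n..b, uniformCDF m n x = b - n := by
    rw [integral_congr (g := fun _ => 1) fun x hx => uniformCDF_eq_one h (by
      rw [uIcc_of_le hb] at hx; exact hx.1)]
    simp
  rw [← integral_add_adjacent_intervals ((continuous_uniformCDF m n).intervalIntegrable _ _)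
    ((continuous_uniformCDF m n).intervalIntegrable _ _),
    integral_uniformCDF_of_le_of_le h ha h.le le_rfl, hone]
  field_simp [(sub_pos.2 h).ne']
  ring

end UniformCDF

section Distance

variable {m₁ n₁ m₂ n₂ : ℝ}

theorem integral_abs_uniformCDF_sub_eq_intervalIntegral {a b : ℝ} (h₁ : m₁ < n₁) (h₂ : m₂ < n₂)
    (ha₁ : a ≤ m₁) (ha₂ : a ≤ m₂) (hb₁ : n₁ ≤ b) (hb₂ : n₂ ≤ b) :
    ∫ x, |uniformCDF m₁ n₁ x - uniformCDF m₂ n₂ x|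
      = ∫ x in a..b, |uniformCDF m₁ n₁ x - uniformCDF m₂ n₂ x| := by
  refine (integral_eq_integral_of_support_subset fun x hx => ?_).symm
  rw [Function.mem_support] at hx
  by_contra hab
  rcases not_and_or.1 hab with hxa | hxb
  · rw [not_lt] at hxa
    rw [uniformCDF_eq_zero h₁ (hxa.trans ha₁), uniformCDF_eq_zero h₂ (hxa.trans ha₂)] at hx
    simp at hx
  · rw [not_le] at hxb
    rw [uniformCDF_eq_one h₁ (by linarith), uniformCDF_eq_one h₂ (by linarith)] at hx
    simp at hx

theorem uniformCDF_le_uniformCDF (h₁ : m₁ < n₁) (h₂ : m₂ < n₂) (hm : m₁ ≤ m₂) (hn : n₁ ≤ n₂)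
    (x : ℝ) : uniformCDF m₂ n₂ x ≤ uniformCDF m₁ n₁ x := by
  rcases le_or_gt x m₂ with hx | hx
  · rw [uniformCDF_eq_zero h₂ hx]
    exact uniformCDF_nonneg _ _ _
  rcases le_or_gt n₁ x with hx' | hx'
  · rw [uniformCDF_eq_one h₁ hx']
    exact uniformCDF_le_one _ _ _
  apply uniformCDF_le_of_div_le
  rw [div_le_div_iff₀ (by linarith) (by linarith)]
  have hcross : (x - m₁) * (n₂ - m₂) - (x - m₂) * (n₁ - m₁)
      = (n₂ - x) * (m₂ - m₁) + (x - m₂) * (n₂ - n₁) := by ring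
  linarith [mul_nonneg (by linarith : (0:ℝ) ≤ n₂ - x) (sub_nonneg.2 hm),
    mul_nonneg (by linarith : (0:ℝ) ≤ x - m₂) (sub_nonneg.2 hn)]

theorem integral_abs_uniformCDF_sub_of_le (h₁ : m₁ < n₁) (h₂ : m₂ < n₂) (hm : m₁ ≤ m₂)
    (hn : n₁ ≤ n₂) :
    ∫ x, |uniformCDF m₁ n₁ x - uniformCDF m₂ n₂ x| = (m₂ - m₁ + n₂ - n₁) / 2 := by
  have hnonneg x : 0 ≤ uniformCDF m₁ n₁ x - uniformCDF m₂ n₂ x :=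
    sub_nonneg.2 (uniformCDF_le_uniformCDF h₁ h₂ hm hn x)
  simp_rw [integral_abs_uniformCDF_sub_eq_intervalIntegral h₁ h₂ le_rfl hm hn le_rfl,
    abs_of_nonneg (hnonneg _)]
  rw [intervalIntegral.integral_sub ((continuous_uniformCDF m₁ n₁).intervalIntegrable _ _)
    ((continuous_uniformCDF m₂ n₂).intervalIntegrable _ _),
    integral_uniformCDF_of_le h₁ le_rfl hn, integral_uniformCDF_of_le h₂ hm le_rfl]
  ring

theorem exists_crossing_uniformCDF (h₁ : m₁ < n₁) (h₂ : m₂ < n₂) (hm : m₁ ≤ m₂)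
    (hn : n₂ < n₁) :
    ∃ c ∈ Icc m₂ n₂,
      (c - m₁) ^ 2 / (2 * (n₁ - m₁)) - (c - m₂) ^ 2 / (2 * (n₂ - m₂))
          = (m₂ - m₁) ^ 2 / (2 * (m₂ - m₁ + n₁ - n₂)) ∧
        (∀ x ≤ c, uniformCDF m₂ n₂ x ≤ uniformCDF m₁ n₁ x) ∧
        ∀ x ≥ c, uniformCDF m₁ n₁ x ≤ uniformCDF m₂ n₂ x := by
  have hL₁ : 0 < n₁ - m₁ := sub_pos.2 h₁
  have hL₂ : 0 < n₂ - m₂ := sub_pos.2 h₂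
  have hD : 0 < m₂ - m₁ + n₁ - n₂ := by linarith
  set c := (m₂ * (n₁ - m₁) - m₁ * (n₂ - m₂)) / (m₂ - m₁ + n₁ - n₂) with hc
  have hcross x : (x - m₁) / (n₁ - m₁) - (x - m₂) / (n₂ - m₂)
      = (m₂ - m₁ + n₁ - n₂) / ((n₁ - m₁) * (n₂ - m₂)) * (c - x) := by
    rw [hc]; field_simp; ring
  have hslope : 0 < (m₂ - m₁ + n₁ - n₂) / ((n₁ - m₁) * (n₂ - m₂)) := by positivity
  have hm₂c : 0 ≤ c - m₂ := by
    rw [hc, div_sub' hD.ne']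
    exact div_nonneg (by nlinarith) hD.le
  have hcn₂ : 0 ≤ n₂ - c := by
    rw [hc, sub_div' hD.ne']
    exact div_nonneg (by nlinarith) hD.le
  refine ⟨c, ⟨sub_nonneg.1 hm₂c, sub_nonneg.1 hcn₂⟩, by rw [hc]; field_simp; ring,
    fun x hx => ?_, fun x hx => ?_⟩
  · exact uniformCDF_le_of_div_le <| sub_nonneg.1 <|
      hcross x ▸ mul_nonneg hslope.le (sub_nonneg.2 hx)
  · exact uniformCDF_le_of_div_le <| sub_nonpos.1 <|
      hcross x ▸ mul_nonpos_of_nonneg_of_nonpos hslope.le (sub_nonpos.2 hx)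

theorem integral_abs_uniformCDF_sub_of_lt (h₁ : m₁ < n₁) (h₂ : m₂ < n₂) (hm : m₁ ≤ m₂)
    (hn : n₂ < n₁) :
    ∫ x, |uniformCDF m₁ n₁ x - uniformCDF m₂ n₂ x|
      = ((m₂ - m₁) ^ 2 + (n₁ - n₂) ^ 2) / (2 * (m₂ - m₁ + n₁ - n₂)) := by
  obtain ⟨c, ⟨hm₂c, hcn₂⟩, hsq, hle, hge⟩ := exists_crossing_uniformCDF h₁ h₂ hm hn
  have hint₁ := (continuous_uniformCDF m₁ n₁).intervalIntegrable (μ := volume)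
  have hint₂ := (continuous_uniformCDF m₂ n₂).intervalIntegrable (μ := volume)
  have hcont := (continuous_uniformCDF m₁ n₁).sub (continuous_uniformCDF m₂ n₂)
  rw [integral_abs_uniformCDF_sub_eq_intervalIntegral h₁ h₂ le_rfl hm le_rfl hn.le,
    integral_abs_eq_of_nonneg_of_nonpos (f := fun x => uniformCDF m₁ n₁ x - uniformCDF m₂ n₂ x)
      (hm.trans hm₂c) (by linarith) (hcont.intervalIntegrable _ _) (hcont.intervalIntegrable _ _)
      (fun x hx => sub_nonneg.2 (hle x hx.2)) (fun x hx => sub_nonpos.2 (hge x hx.1)),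
    intervalIntegral.integral_sub (hint₁ _ _) (hint₂ _ _),
    intervalIntegral.integral_sub (hint₁ _ _) (hint₂ _ _),
    integral_uniformCDF_of_le_of_le h₁ le_rfl (hm.trans hm₂c) (by linarith),
    integral_uniformCDF_of_le_of_le h₂ hm hm₂c hcn₂,
    integral_uniformCDF_of_le h₁ le_rfl le_rfl, integral_uniformCDF_of_le h₂ hm hn.le, hsq]
  have hD : m₂ - m₁ + n₁ - n₂ ≠ 0 := by linarith
  field_simp
  ring

end Distance

theorem stmt_12 (m₁ n₁ m₂ n₂ : ℝ) (h₁ : m₁ < n₁) (h₂ : m₂ < n₂) (hm : m₁ ≤ m₂) :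
    (1 / 2) * ∫ x : ℝ, |uniformCDF m₁ n₁ x - uniformCDF m₂ n₂ x|
      = if n₁ ≤ n₂ then (m₂ - m₁ + n₂ - n₁) / 4
        else ((m₂ - m₁) ^ 2 + (n₁ - n₂) ^ 2) / (4 * (m₂ - m₁ + n₁ - n₂)) := by
  split_ifs with hn
  · rw [integral_abs_uniformCDF_sub_of_le h₁ h₂ hm hn]
    ring
  · rw [integral_abs_uniformCDF_sub_of_lt h₁ h₂ hm (not_le.1 hn)]
    field_simp
    ring
end

section
/- Let 0 < θ₂ < θ₁ < 1 and let k₀ be the natural number ⌊(ln θ₂ − ln θ₁) / (ln(1 − θ₁) − ln(1 − θ₂))⌋ + 1. Then ∑_{k=0}^{∞} |(1 − θ₁)^k θ₁ − (1 − θ₂)^k θ₂| = 2((1 − θ₂)^{k₀} − (1 − θ₁)^{k₀}). -/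
/-!
The logarithm of the ratio of the two pmfs is affine in `k`, so `(1 - θ₂)^k θ₂ ≤ (1 - θ₁)^k θ₁`
holds exactly for `k < k₀`. Both pmfs have total mass `1`, so the excess of the first over the
second on `k < k₀` equals the excess of the second over the first on `k ≥ k₀`, and the `L¹`
distance is twice the latter. The tail mass of a geometric distribution beyond `k₀` is `(1 - θ)^k₀`.
-/

open Finset

theorem tsum_abs_sub_eq_two_mul_tail_sub {f g : ℕ → ℝ} {a : ℝ} (hf : HasSum f a) (hg : HasSum g a)
    (n : ℕ) (hlt : ∀ k < n, g k ≤ f k) (hge : ∀ k, n ≤ k → f k ≤ g k) :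
    ∑' k, |f k - g k| = 2 * (∑' k, g (k + n) - ∑' k, f (k + n)) := by
  have split_f := hf.summable.sum_add_tsum_nat_add n
  have split_g := hg.summable.sum_add_tsum_nat_add n
  have head : ∑ k ∈ range n, |f k - g k| = ∑ k ∈ range n, f k - ∑ k ∈ range n, g k := by
    rw [← sum_sub_distrib]
    exact sum_congr rfl fun k hk => abs_of_nonneg (sub_nonneg.2 (hlt k (mem_range.1 hk)))
  have tail : ∑' k, |f (k + n) - g (k + n)| = ∑' k, g (k + n) - ∑' k, f (k + n) := by
    rw [← ((summable_nat_add_iff n).2 hg.summable).tsum_sub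
      ((summable_nat_add_iff n).2 hf.summable)]
    refine tsum_congr fun k => ?_
    rw [abs_of_nonpos (sub_nonpos.2 (hge _ (Nat.le_add_left _ _))), neg_sub]
  rw [← (hf.summable.sub hg.summable).abs.sum_add_tsum_nat_add n, head, tail]
  rw [hf.tsum_eq] at split_f
  rw [hg.tsum_eq] at split_g
  linarith

theorem hasSum_geometric_pmf_nat_add {θ : ℝ} (h₀ : 0 < θ) (h₁ : θ ≤ 1) (n : ℕ) :
    HasSum (fun k => (1 - θ) ^ (k + n) * θ) ((1 - θ) ^ n) := by
  have h := (hasSum_geometric_of_lt_one (sub_nonneg.2 h₁) (sub_lt_self 1 h₀)).mul_left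
    ((1 - θ) ^ n * θ)
  rw [sub_sub_cancel, mul_assoc, mul_inv_cancel₀ h₀.ne', mul_one] at h
  rwa [show (fun k => (1 - θ) ^ (k + n) * θ) = fun k => (1 - θ) ^ n * θ * (1 - θ) ^ k from
    funext fun k => by ring]

theorem geometric_pmf_le_iff {θ₁ θ₂ : ℝ} (h₂ : 0 < θ₂) (h₁₂ : θ₂ < θ₁) (h₁ : θ₁ < 1) (k : ℕ) :
    (1 - θ₂) ^ k * θ₂ ≤ (1 - θ₁) ^ k * θ₁ ↔
      (k : ℝ) ≤ (Real.log θ₂ - Real.log θ₁) / (Real.log (1 - θ₁) - Real.log (1 - θ₂)) := by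
  have hθ₁ : 0 < θ₁ := h₂.trans h₁₂
  have hq₁ : 0 < 1 - θ₁ := sub_pos.2 h₁
  have hq₂ : 0 < 1 - θ₂ := sub_pos.2 (h₁₂.trans h₁)
  have hlog : Real.log (1 - θ₁) - Real.log (1 - θ₂) < 0 :=
    sub_neg.2 (Real.log_lt_log hq₁ (by linarith))
  rw [le_div_iff_of_neg hlog, ← Real.log_le_log_iff (by positivity) (by positivity),
    Real.log_mul (by positivity) h₂.ne', Real.log_mul (by positivity) hθ₁.ne', Real.log_pow,
    Real.log_pow, mul_sub]
  constructor <;> intro h <;> linarith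

theorem stmt_14 (θ₁ θ₂ : ℝ) (h₂ : 0 < θ₂) (h₁₂ : θ₂ < θ₁) (h₁ : θ₁ < 1)
    (k₀ : ℕ)
    (hk₀ : k₀ = ⌊(Real.log θ₂ - Real.log θ₁) / (Real.log (1 - θ₁) - Real.log (1 - θ₂))⌋₊ + 1) :
    (∑' k : ℕ, |(1 - θ₁) ^ k * θ₁ - (1 - θ₂) ^ k * θ₂|)
      = 2 * ((1 - θ₂) ^ k₀ - (1 - θ₁) ^ k₀) := by
  set q := (Real.log θ₂ - Real.log θ₁) / (Real.log (1 - θ₁) - Real.log (1 - θ₂))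
  have hθ₁ : 0 < θ₁ := h₂.trans h₁₂
  have hq : 0 ≤ q := by
    simpa using (geometric_pmf_le_iff h₂ h₁₂ h₁ 0).1 (by simpa using h₁₂.le)
  have crossing (k : ℕ) : (1 - θ₂) ^ k * θ₂ ≤ (1 - θ₁) ^ k * θ₁ ↔ k < k₀ := by
    rw [geometric_pmf_le_iff h₂ h₁₂ h₁, hk₀, Nat.lt_succ_iff, Nat.le_floor_iff hq]
  have total (θ : ℝ) (hθ₀ : 0 < θ) (hθ₁ : θ ≤ 1) : HasSum (fun k => (1 - θ) ^ k * θ) 1 := by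
    simpa using hasSum_geometric_pmf_nat_add hθ₀ hθ₁ 0
  rw [tsum_abs_sub_eq_two_mul_tail_sub (total θ₁ hθ₁ h₁.le) (total θ₂ h₂ (h₁₂.trans h₁).le) k₀
      (fun k hk => (crossing k).2 hk)
      (fun k hk => (lt_of_not_ge fun h => hk.not_gt ((crossing k).1 h)).le),
    (hasSum_geometric_pmf_nat_add h₂ (h₁₂.trans h₁).le k₀).tsum_eq,
    (hasSum_geometric_pmf_nat_add hθ₁ h₁.le k₀).tsum_eq]
end

section
/- Let n be a positive integer, 0 < θ₂ < θ₁ < 1, and let k₀ be the natural number ⌊ n·ln((1 − θ₂)/(1 − θ₁)) / ln( (θ₁(1 − θ₂)) / (θ₂(1 − θ₁)) ) ⌋. Then ∑_{k=0}^{n} | C(n,k) θ₁^k (1 − θ₁)^{n−k} − C(n,k) θ₂^k (1 − θ₂)^{n−k} | = 2 ∑_{k=0}^{k₀} ( C(n,k) θ₂^k (1 − θ₂)^{n−k} − C(n,k) θ₁^k (1 − θ₁)^{n−k} ), where C(n,k) denotes the binomial coefficient. -/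
/-!
Taking logarithms, `C(n,k) θ₁^k (1-θ₁)^(n-k) ≤ C(n,k) θ₂^k (1-θ₂)^(n-k)` is a linear inequality
in `k` which holds exactly for `k ≤ k'`, with `k'` the crossing point of the statement; since
`0 ≤ k' ≤ n`, the two mass functions cross once, between `k₀ = ⌊k'⌋` and `k₀ + 1`. Both masses
sum to `1`, so the positive and negative parts of their difference have equal total mass, and
the `L¹` distance is twice the mass of the part on `{0, …, k₀}`.
-/

open Finset Real

section SingleCrossing

variable {α : Type*} [CommRing α] [LinearOrder α] [IsStrictOrderedRing α]

theorem sum_abs_sub_eq_two_mul_sum_of_crossing {f g : ℕ → α} {m N : ℕ} (hmN : m ≤ N)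
    (hsum : ∑ k ∈ range N, f k = ∑ k ∈ range N, g k)
    (hle : ∀ k < m, f k ≤ g k) (hge : ∀ k, m ≤ k → k < N → g k ≤ f k) :
    ∑ k ∈ range N, |f k - g k| = 2 * ∑ k ∈ range m, (g k - f k) := by
  have htail : ∑ k ∈ Ico m N, (f k - g k) = ∑ k ∈ range m, (g k - f k) := by
    have hsplit := sum_range_add_sum_Ico (fun k => f k - g k) hmN
    rw [sum_sub_distrib (s := range N), hsum, sub_self] at hsplit
    simp only [eq_neg_of_add_eq_zero_right hsplit, ← sum_neg_distrib, neg_sub]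
  calc ∑ k ∈ range N, |f k - g k|
      = ∑ k ∈ range m, |f k - g k| + ∑ k ∈ Ico m N, |f k - g k| :=
        (sum_range_add_sum_Ico _ hmN).symm
    _ = ∑ k ∈ range m, (g k - f k) + ∑ k ∈ Ico m N, (f k - g k) := by
        congr 1 <;> refine sum_congr rfl fun k hk => ?_
        · rw [abs_sub_comm, abs_of_nonneg (sub_nonneg.2 (hle k (mem_range.1 hk)))]
        · obtain ⟨hmk, hkN⟩ := mem_Ico.1 hk
          exact abs_of_nonneg (sub_nonneg.2 (hge k hmk hkN))
    _ = 2 * ∑ k ∈ range m, (g k - f k) := by rw [htail, two_mul]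

end SingleCrossing

noncomputable def binomialMass (n : ℕ) (θ : ℝ) (k : ℕ) : ℝ :=
  n.choose k * θ ^ k * (1 - θ) ^ (n - k)

theorem sum_binomialMass (n : ℕ) (θ : ℝ) : ∑ k ∈ range (n + 1), binomialMass n θ k = 1 := by
  have h := add_pow θ (1 - θ) n
  rw [add_sub_cancel, one_pow] at h
  rw [h]
  exact sum_congr rfl fun k _ => by rw [binomialMass]; ring

theorem log_binomialMass {n k : ℕ} {θ : ℝ} (hk : k ≤ n) (hθ₀ : 0 < θ) (hθ₁ : θ < 1) :
    log (binomialMass n θ k) = log (n.choose k) + k * log θ + (n - k) * log (1 - θ) := by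
  have hchoose : (n.choose k : ℝ) ≠ 0 := by exact_mod_cast (Nat.choose_pos hk).ne'
  have h1θ : 0 < 1 - θ := sub_pos.2 hθ₁
  rw [binomialMass, log_mul (by positivity) (by positivity), log_mul hchoose (by positivity),
    log_pow, log_pow, Nat.cast_sub hk]

/-- The real solution `k` of `θ₁ ^ k * (1 - θ₁) ^ (n - k) = θ₂ ^ k * (1 - θ₂) ^ (n - k)`. -/
noncomputable def binomialCrossing (n : ℕ) (θ₁ θ₂ : ℝ) : ℝ :=
  n * log ((1 - θ₂) / (1 - θ₁)) / log ((θ₁ * (1 - θ₂)) / (θ₂ * (1 - θ₁)))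

theorem binomialCrossing_eq {θ₁ θ₂ : ℝ} (h₂ : 0 < θ₂) (h₁₂ : θ₂ < θ₁) (h₁ : θ₁ < 1) (n : ℕ) :
    binomialCrossing n θ₁ θ₂ = n * (log (1 - θ₂) - log (1 - θ₁)) /
      ((log θ₁ - log θ₂) + (log (1 - θ₂) - log (1 - θ₁))) := by
  have h₁' : 0 < θ₁ := h₂.trans h₁₂
  have h1θ₁ : 0 < 1 - θ₁ := by linarith
  have h1θ₂ : 0 < 1 - θ₂ := by linarith
  rw [binomialCrossing, log_div (by positivity) (by positivity),
    log_div (by positivity) (by positivity), log_mul (by positivity) (by positivity),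
    log_mul (by positivity) (by positivity)]
  ring_nf

theorem binomialMass_pos {n k : ℕ} {θ : ℝ} (hk : k ≤ n) (hθ₀ : 0 < θ) (hθ₁ : θ < 1) :
    0 < binomialMass n θ k := by
  have h1θ : 0 < 1 - θ := sub_pos.2 hθ₁
  have hchoose : (0 : ℝ) < n.choose k := by exact_mod_cast Nat.choose_pos hk
  unfold binomialMass
  positivity

section Crossing

variable {θ₁ θ₂ : ℝ}

theorem log_ratios_pos (h₂ : 0 < θ₂) (h₁₂ : θ₂ < θ₁) (h₁ : θ₁ < 1) :
    0 < log θ₁ - log θ₂ ∧ 0 < log (1 - θ₂) - log (1 - θ₁) :=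
  ⟨sub_pos.2 (log_lt_log h₂ h₁₂), sub_pos.2 (log_lt_log (by linarith) (by linarith))⟩

theorem binomialMass_le_binomialMass_iff {n k : ℕ} (hk : k ≤ n) (h₂ : 0 < θ₂) (h₁₂ : θ₂ < θ₁)
    (h₁ : θ₁ < 1) :
    binomialMass n θ₁ k ≤ binomialMass n θ₂ k ↔ (k : ℝ) ≤ binomialCrossing n θ₁ θ₂ := by
  have h₁' : 0 < θ₁ := h₂.trans h₁₂
  have h₂' : θ₂ < 1 := h₁₂.trans h₁
  obtain ⟨ha, hb⟩ := log_ratios_pos h₂ h₁₂ h₁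
  rw [← log_le_log_iff (binomialMass_pos hk h₁' h₁) (binomialMass_pos hk h₂ h₂'),
    log_binomialMass hk h₁' h₁, log_binomialMass hk h₂ h₂', binomialCrossing_eq h₂ h₁₂ h₁,
    le_div_iff₀ (by positivity)]
  constructor <;> intro h <;> linarith

theorem binomialCrossing_nonneg (n : ℕ) (h₂ : 0 < θ₂) (h₁₂ : θ₂ < θ₁) (h₁ : θ₁ < 1) :
    0 ≤ binomialCrossing n θ₁ θ₂ := by
  obtain ⟨ha, hb⟩ := log_ratios_pos h₂ h₁₂ h₁
  rw [binomialCrossing_eq h₂ h₁₂ h₁]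
  positivity

theorem binomialCrossing_le (n : ℕ) (h₂ : 0 < θ₂) (h₁₂ : θ₂ < θ₁) (h₁ : θ₁ < 1) :
    binomialCrossing n θ₁ θ₂ ≤ n := by
  obtain ⟨ha, hb⟩ := log_ratios_pos h₂ h₁₂ h₁
  rw [binomialCrossing_eq h₂ h₁₂ h₁, div_le_iff₀ (by positivity)]
  exact mul_le_mul_of_nonneg_left (by linarith) n.cast_nonneg

end Crossing

theorem stmt_15_general (n : ℕ) (θ₁ θ₂ : ℝ) (h₂ : 0 < θ₂) (h₁₂ : θ₂ < θ₁) (h₁ : θ₁ < 1)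
    (k₀ : ℕ)
    (hk₀ : k₀ = ⌊(n : ℝ) * Real.log ((1 - θ₂) / (1 - θ₁))
        / Real.log ((θ₁ * (1 - θ₂)) / (θ₂ * (1 - θ₁)))⌋₊) :
    (∑ k ∈ Finset.range (n + 1),
        |(n.choose k : ℝ) * θ₁ ^ k * (1 - θ₁) ^ (n - k)
          - (n.choose k : ℝ) * θ₂ ^ k * (1 - θ₂) ^ (n - k)|)
      = 2 * ∑ k ∈ Finset.range (k₀ + 1),
          ((n.choose k : ℝ) * θ₂ ^ k * (1 - θ₂) ^ (n - k)
            - (n.choose k : ℝ) * θ₁ ^ k * (1 - θ₁) ^ (n - k)) := by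
  change k₀ = ⌊binomialCrossing n θ₁ θ₂⌋₊ at hk₀
  have hc₀ := binomialCrossing_nonneg n h₂ h₁₂ h₁
  have hk₀n : k₀ ≤ n := hk₀ ▸ Nat.floor_le_of_le (binomialCrossing_le n h₂ h₁₂ h₁)
  refine sum_abs_sub_eq_two_mul_sum_of_crossing (f := binomialMass n θ₁) (g := binomialMass n θ₂)
    (by omega) (by rw [sum_binomialMass, sum_binomialMass]) (fun k hk => ?_) (fun k hk hkn => ?_)
  · rw [binomialMass_le_binomialMass_iff (by omega) h₂ h₁₂ h₁]
    exact (Nat.le_floor_iff hc₀).1 (hk₀ ▸ Nat.lt_succ_iff.1 hk)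
  · have hlt : binomialCrossing n θ₁ θ₂ < k := Nat.lt_of_floor_lt (hk₀ ▸ hk)
    exact (not_le.1 fun h => hlt.not_ge
      ((binomialMass_le_binomialMass_iff (by omega) h₂ h₁₂ h₁).1 h)).le

theorem stmt_15 (n : ℕ) (hn : 0 < n) (θ₁ θ₂ : ℝ) (h₂ : 0 < θ₂) (h₁₂ : θ₂ < θ₁) (h₁ : θ₁ < 1)
    (k₀ : ℕ)
    (hk₀ : k₀ = ⌊(n : ℝ) * Real.log ((1 - θ₂) / (1 - θ₁))
        / Real.log ((θ₁ * (1 - θ₂)) / (θ₂ * (1 - θ₁)))⌋₊) :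
    (∑ k ∈ Finset.range (n + 1),
        |(n.choose k : ℝ) * θ₁ ^ k * (1 - θ₁) ^ (n - k)
          - (n.choose k : ℝ) * θ₂ ^ k * (1 - θ₂) ^ (n - k)|)
      = 2 * ∑ k ∈ Finset.range (k₀ + 1),
          ((n.choose k : ℝ) * θ₂ ^ k * (1 - θ₂) ^ (n - k)
            - (n.choose k : ℝ) * θ₁ ^ k * (1 - θ₁) ^ (n - k)) :=
  stmt_15_general n θ₁ θ₂ h₂ h₁₂ h₁ k₀ hk₀
end

section
/- Let 0 < θ₂ < θ₁ and let k₀ be the natural number ⌊(θ₁ − θ₂) / (ln θ₁ − ln θ₂)⌋ + 1. Then ∑_{k=0}^{∞} | θ₁^k e^{−θ₁}/k! − θ₂^k e^{−θ₂}/k! | = 2 ∑_{k=0}^{k₀ − 1} ( θ₂^k e^{−θ₂}/k! − θ₁^k e^{−θ₁}/k! ). -/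
/-!
The difference `Poisson(θ₁) - Poisson(θ₂)` of the two pmfs sums to `0`, and since the ratio
`θ₁ᵏ e^{-θ₁} / (θ₂ᵏ e^{-θ₂}) = exp (k (log θ₁ - log θ₂) - (θ₁ - θ₂))` is increasing in `k`, the
difference is `≤ 0` exactly for `k ≤ (θ₁ - θ₂) / (log θ₁ - log θ₂)`, i.e. for `k < k₀`, and `≥ 0`
afterwards. For a sequence summing to `0` with a single sign change, the sum of absolute values is
twice the negative part.
-/

open Real Finset

noncomputable def poissonWeight (θ : ℝ) (k : ℕ) : ℝ :=
  θ ^ k * exp (-θ) / k.factorial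

theorem hasSum_poissonWeight (θ : ℝ) : HasSum (poissonWeight θ) 1 := by
  have h := (NormedSpace.expSeries_div_hasSum_exp θ).mul_left (exp (-θ))
  rw [← Real.exp_eq_exp_ℝ, ← exp_add, neg_add_cancel, exp_zero] at h
  have hw : poissonWeight θ = fun k => exp (-θ) * (θ ^ k / k.factorial) := by
    ext k
    rw [poissonWeight]
    ring
  rwa [hw]

theorem tsum_abs_eq_two_mul_sum_range_neg {d : ℕ → ℝ} {n : ℕ} (hd : HasSum d 0)
    (hneg : ∀ k < n, d k ≤ 0) (hpos : ∀ k, n ≤ k → 0 ≤ d k) :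
    ∑' k, |d k| = 2 * ∑ k ∈ range n, -d k := by
  have hhead : HasSum (fun k => if k < n then d k else 0) (∑ k ∈ range n, d k) := by
    rw [← sum_congr rfl fun k hk => if_pos (mem_range.1 hk)]
    exact hasSum_sum_of_ne_finset_zero fun k hk => if_neg (by simpa using hk)
  have habs : ∀ k, |d k| = d k - 2 * if k < n then d k else 0 := by
    intro k
    split_ifs with hk
    · rw [abs_of_nonpos (hneg k hk)]; ring
    · rw [abs_of_nonneg (hpos k (not_lt.1 hk))]; ring
  rw [funext habs, (hd.sub (hhead.mul_left 2)).tsum_eq, sum_neg_distrib]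
  ring

theorem poissonWeight_le_poissonWeight_iff {θ₁ θ₂ : ℝ} (h₂ : 0 < θ₂) (h₁₂ : θ₂ < θ₁) (k : ℕ) :
    poissonWeight θ₁ k ≤ poissonWeight θ₂ k ↔ (k : ℝ) ≤ (θ₁ - θ₂) / (log θ₁ - log θ₂) := by
  have hlog : 0 < log θ₁ - log θ₂ := sub_pos.2 (log_lt_log h₂ h₁₂)
  have hexp : ∀ θ, 0 < θ → θ ^ k * exp (-θ) = exp (k * log θ - θ) := fun θ hθ => by
    rw [sub_eq_add_neg, exp_add, exp_nat_mul, exp_log hθ]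
  rw [poissonWeight, poissonWeight, div_le_div_iff_of_pos_right (by positivity),
    hexp θ₁ (h₂.trans h₁₂), hexp θ₂ h₂, exp_le_exp, le_div_iff₀ hlog]
  constructor <;> intro h <;> linarith

theorem stmt_16 (θ₁ θ₂ : ℝ) (h₂ : 0 < θ₂) (h₁₂ : θ₂ < θ₁)
    (k₀ : ℕ) (hk₀ : k₀ = ⌊(θ₁ - θ₂) / (Real.log θ₁ - Real.log θ₂)⌋₊ + 1) :
    (∑' k : ℕ, |θ₁ ^ k * Real.exp (-θ₁) / (Nat.factorial k : ℝ)
        - θ₂ ^ k * Real.exp (-θ₂) / (Nat.factorial k : ℝ)|)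
      = 2 * ∑ k ∈ Finset.range k₀,
          (θ₂ ^ k * Real.exp (-θ₂) / (Nat.factorial k : ℝ)
            - θ₁ ^ k * Real.exp (-θ₁) / (Nat.factorial k : ℝ)) := by
  have hc : 0 ≤ (θ₁ - θ₂) / (log θ₁ - log θ₂) :=
    div_nonneg (sub_pos.2 h₁₂).le (sub_pos.2 (log_lt_log h₂ h₁₂)).le
  have hsum : HasSum (fun k => poissonWeight θ₁ k - poissonWeight θ₂ k) 0 := by
    simpa using (hasSum_poissonWeight θ₁).sub (hasSum_poissonWeight θ₂)
  have hcross := poissonWeight_le_poissonWeight_iff h₂ h₁₂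
  have hbelow : ∀ k < k₀, poissonWeight θ₁ k - poissonWeight θ₂ k ≤ 0 := fun k hk =>
    sub_nonpos.2 <| (hcross k).2 <| (Nat.le_floor_iff hc).1 (by omega)
  have habove : ∀ k, k₀ ≤ k → 0 ≤ poissonWeight θ₁ k - poissonWeight θ₂ k := fun k hk =>
    sub_nonneg.2 <| (not_le.1 fun h => (Nat.lt_of_floor_lt (by omega)).not_ge ((hcross k).1 h)).le
  simpa only [poissonWeight, neg_sub] using tsum_abs_eq_two_mul_sum_range_neg hsum hbelow habove
end

section
/- Fix α ∈ (0,1), reals λ̲ > 0 and s > 0, an integer N ≥ 1, and ε > 0. Let Λ be a random variable uniformly distributed on [λ̲, λ̲ + N·s] and define the quantization map M(λ) = λ̲ + (⌊(λ − λ̲)/s⌋ + 1/2)·s. Then for every measurable attacker ĝ : ℝ → ℝ, P( |ĝ(M(Λ)) − (−ln(1 − α))·Λ| ≤ ε ) ≤ 2ε / (−ln(1 − α)·s). -/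
open MeasureTheory Set

/-!
On the quantization bin `[lam₀ + k s, lam₀ + (k + 1) s)` the released value `M Λ` is constant, so
whatever the attacker outputs, the secret `c Λ` (with `c = -log (1 - α) > 0`) lies within `ε` of it
only for `Λ` in an interval of length `2 ε / c`. The `N` bins therefore contribute a set of Lebesgue
measure at most `N · 2 ε / c`, and the uniform density `1 / (N s)` turns this into `2 ε / (c s)`.
-/

lemma setOf_abs_sub_mul_le_eq_Icc {a c ε : ℝ} (hc : 0 < c) :
    {x : ℝ | |a - c * x| ≤ ε} = Icc ((a - ε) / c) ((a + ε) / c) := by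
  ext x
  simp only [mem_ofPred_eq, mem_Icc, abs_le, div_le_iff₀ hc, le_div_iff₀ hc]
  constructor <;> rintro ⟨h₁, h₂⟩ <;> constructor <;> linarith

lemma volume_setOf_abs_sub_mul_le {a c ε : ℝ} (hc : 0 < c) :
    volume {x : ℝ | |a - c * x| ≤ ε} = ENNReal.ofReal (2 * ε / c) := by
  rw [setOf_abs_sub_mul_le_eq_Icc hc, Real.volume_Icc]
  congr 1
  ring

lemma volume_setOf_abs_comp_sub_mul_le_inter {ι : Type*} (q : ℝ → ι) (h : ι → ℝ) {S : Finset ι}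
    {B : Set ℝ} (hB : MapsTo q B S) {c : ℝ} (hc : 0 < c) (ε : ℝ) :
    volume ({x | |h (q x) - c * x| ≤ ε} ∩ B) ≤ S.card * ENNReal.ofReal (2 * ε / c) :=
  calc volume ({x | |h (q x) - c * x| ≤ ε} ∩ B)
      ≤ volume (⋃ i ∈ S, {x : ℝ | |h i - c * x| ≤ ε}) :=
        measure_mono fun _ ⟨hx, hxB⟩ => mem_biUnion (hB hxB) hx
    _ ≤ ∑ i ∈ S, volume {x : ℝ | |h i - c * x| ≤ ε} := measure_biUnion_finset_le _ _
    _ = S.card * ENNReal.ofReal (2 * ε / c) := by simp [volume_setOf_abs_sub_mul_le hc]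

lemma mapsTo_floor_sub_div_Ico (x₀ : ℝ) {s : ℝ} (hs : 0 < s) (N : ℕ) :
    MapsTo (fun x => ⌊(x - x₀) / s⌋) (Ico x₀ (x₀ + N * s)) (Finset.Ico (0 : ℤ) N) := by
  rintro x ⟨h₀, h₁⟩
  simp only [Finset.coe_Ico, mem_Ico, Int.floor_nonneg, Int.floor_lt, Int.cast_natCast]
  exact ⟨div_nonneg (by linarith) hs.le, by rw [div_lt_iff₀ hs]; linarith⟩

lemma ofReal_one_div_mul_natCast_le (N : ℕ) {s : ℝ} (hs : 0 < s) :
    ENNReal.ofReal (1 / (N * s)) * N ≤ ENNReal.ofReal (1 / s) := by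
  rcases N.eq_zero_or_pos with rfl | hN
  · simp
  · rw [← ENNReal.ofReal_natCast, ← ENNReal.ofReal_mul (by positivity), one_div_mul_eq_div,
      div_mul_cancel_left₀ (by positivity), one_div]

theorem stmt_18_general {Ω : Type*} [MeasurableSpace Ω] (μ : Measure Ω) [IsProbabilityMeasure μ]
    (α : ℝ) (hα0 : 0 < α) (hα1 : α < 1)
    (lam₀ s ε : ℝ) (hs : 0 < s) (N : ℕ)
    (Λ : Ω → ℝ) (hΛ : Measurable Λ)
    (hΛdist : Measure.map Λ μ
      = ENNReal.ofReal (1 / (N * s)) • volume.restrict (Set.Icc lam₀ (lam₀ + N * s)))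
    (M : ℝ → ℝ) (hM : ∀ lam : ℝ, M lam = lam₀ + ((⌊(lam - lam₀) / s⌋ : ℝ) + 1 / 2) * s)
    (g : ℝ → ℝ) :
    μ {ω | |g (M (Λ ω)) - (-Real.log (1 - α)) * Λ ω| ≤ ε}
      ≤ ENNReal.ofReal (2 * ε / (-Real.log (1 - α) * s)) := by
  set c := -Real.log (1 - α)
  have hc : 0 < c := neg_pos.2 (Real.log_neg (by linarith) (by linarith))
  set A := {x : ℝ | |g (lam₀ + ((⌊(x - lam₀) / s⌋ : ℝ) + 1 / 2) * s) - c * x| ≤ ε}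
  have hA : volume (A ∩ Icc lam₀ (lam₀ + N * s)) ≤ N * ENNReal.ofReal (2 * ε / c) := by
    -- the endpoint `lam₀ + N s` would open an `(N+1)`-st bin, but it is a null set
    rw [measure_congr ((ae_eq_refl A).inter Ico_ae_eq_Icc.symm)]
    have := volume_setOf_abs_comp_sub_mul_le_inter _ (fun k : ℤ ↦ g (lam₀ + (k + 1 / 2) * s))
      (mapsTo_floor_sub_div_Ico lam₀ hs N) hc ε
    rwa [Int.card_Ico, sub_zero, Int.toNat_natCast] at this
  have hpre : {ω | |g (M (Λ ω)) - c * Λ ω| ≤ ε} = Λ ⁻¹' A := by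
    ext ω
    rw [mem_preimage, mem_ofPred_eq, mem_ofPred_eq, hM]
  calc μ {ω | |g (M (Λ ω)) - c * Λ ω| ≤ ε} = μ (Λ ⁻¹' A) := by rw [hpre]
    _ ≤ μ.map Λ A := Measure.le_map_apply hΛ.aemeasurable A
    _ = ENNReal.ofReal (1 / (N * s)) * volume (A ∩ Icc lam₀ (lam₀ + N * s)) := by
      rw [hΛdist, Measure.smul_apply, smul_eq_mul, Measure.restrict_apply' measurableSet_Icc]
    _ ≤ ENNReal.ofReal (1 / (N * s)) * N * ENNReal.ofReal (2 * ε / c) := by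
      rw [mul_assoc]; gcongr
    _ ≤ ENNReal.ofReal (1 / s) * ENNReal.ofReal (2 * ε / c) := by
      gcongr; exact ofReal_one_div_mul_natCast_le N hs
    _ = ENNReal.ofReal (2 * ε / (c * s)) := by
      rw [← ENNReal.ofReal_mul (by positivity)]
      congr 1
      field_simp

theorem stmt_18 {Ω : Type*} [MeasurableSpace Ω] (μ : Measure Ω) [IsProbabilityMeasure μ]
    (α : ℝ) (hα0 : 0 < α) (hα1 : α < 1)
    (lam₀ s ε : ℝ) (hlam₀ : 0 < lam₀) (hs : 0 < s) (hε : 0 < ε) (N : ℕ) (hN : 1 ≤ N)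
    (Λ : Ω → ℝ) (hΛ : Measurable Λ)
    (hΛdist : Measure.map Λ μ
      = ENNReal.ofReal (1 / (N * s)) • volume.restrict (Set.Icc lam₀ (lam₀ + N * s)))
    (M : ℝ → ℝ) (hM : ∀ lam : ℝ, M lam = lam₀ + ((⌊(lam - lam₀) / s⌋ : ℝ) + 1 / 2) * s)
    (g : ℝ → ℝ) (hg : Measurable g) :
    μ {ω | |g (M (Λ ω)) - (-Real.log (1 - α)) * Λ ω| ≤ ε}
      ≤ ENNReal.ofReal (2 * ε / (-Real.log (1 - α) * s)) :=
  stmt_18_general μ α hα0 hα1 lam₀ s ε hs N Λ hΛ hΛdist M hM g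
end
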